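/- Let N, M be quantum channels from matrices on A to matrices on B, let ε ∈ (0,1) and n ≥ 1. For every finite reference type R and every density matrix ψ on R^n × A^n, there exist a finite type R̃ and a unit vector |φ⟩ in the n-fold tensor power of ℂ^{R̃×A} that is fixed by every permutation of the n tensor factors (i.e., |φ⟩ lies in the symmetric subspace Sym^n(R̃×A)) such that D_H^ε((id ⊗ N^{⊗n})(ψ) ‖ (id ⊗ M^{⊗n})(ψ)) ≤ D_H^ε((id ⊗ N^{⊗n})(|φ⟩⟨φ|) ‖ (id ⊗ M^{⊗n})(|φ⟩⟨φ|)). -/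

import Mathlib

open scoped Kronecker ComplexOrder Classical

noncomputable section

/-- Square complex matrices indexed by `ι`. -/
abbrev MatC (ι : Type*) := Matrix ι ι ℂ

/-- A density matrix: positive semidefinite with trace one. -/
def IsDensity {ι : Type*} [Fintype ι] (ρ : MatC ι) : Prop :=
  ρ.PosSemidef ∧ ρ.trace = 1

/-- Functional calculus for Hermitian matrices (junk value `0` otherwise). -/
def funCalc {ι : Type*} [Fintype ι] [DecidableEq ι] (X : MatC ι) (f : ℝ → ℝ) : MatC ι :=
  if hX : X.IsHermitian then
    (hX.eigenvectorUnitary : MatC ι) * Matrix.diagonal (fun i => (f (hX.eigenvalues i) : ℂ)) *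
      star (hX.eigenvectorUnitary : MatC ι)
  else 0

/-- Real matrix power by functional calculus, with the convention `0 ^ t = 0`
(powers taken on the support). -/
def matPow {ι : Type*} [Fintype ι] [DecidableEq ι] (X : MatC ι) (t : ℝ) : MatC ι :=
  funCalc X fun x => if x ≤ 0 then 0 else Real.rpow x t

/-- Base-2 matrix logarithm by functional calculus on the support. -/
def matLog2 {ι : Type*} [Fintype ι] [DecidableEq ι] (X : MatC ι) : MatC ι :=
  funCalc X fun x => if x ≤ 0 then 0 else Real.logb 2 x

/-- Trace of the positive part of a Hermitian matrix: the sum of its nonnegative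
eigenvalues (junk value `0` for non-Hermitian input). -/
def trPos {ι : Type*} [Fintype ι] [DecidableEq ι] (X : MatC ι) : ℝ :=
  if hX : X.IsHermitian then ∑ i, max (hX.eigenvalues i) 0 else 0

/-- Largest eigenvalue (operator norm for PSD matrices). -/
def maxEig {ι : Type*} [Fintype ι] [DecidableEq ι] (X : MatC ι) : ℝ :=
  if hX : X.IsHermitian then ⨆ i, hX.eigenvalues i else 0

/-- Support inclusion `supp ρ ⊆ supp σ`, expressed via kernels. -/
def SuppLe {ι : Type*} [Fintype ι] (ρ σ : MatC ι) : Prop :=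
  ∀ v : ι → ℂ, σ.mulVec v = 0 → ρ.mulVec v = 0

/-- `−log₂` with the convention `−log₂ 0 = +∞`, valued in extended reals. -/
def negLog2 (x : ℝ) : EReal := if x ≤ 0 then ⊤ else ((-Real.logb 2 x : ℝ) : EReal)

/-- `log₂` with the convention `log₂ 0 = −∞`, valued in extended reals. -/
def elog2 (x : ℝ) : EReal := if x ≤ 0 then ⊥ else ((Real.logb 2 x : ℝ) : EReal)

/-! ### Channels -/

/-- The Kronecker extension `id_R ⊗ N` of a linear map on matrices. -/
def idTensor (R : Type*) {A B : Type*} (N : MatC A →ₗ[ℂ] MatC B) :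
    MatC (R × A) →ₗ[ℂ] MatC (R × B) where
  toFun X := Matrix.of fun p q => N (Matrix.of fun a a' => X (p.1, a) (q.1, a')) p.2 q.2
  map_add' X Y := by
    ext p q
    show N (Matrix.of fun a a' => (X + Y) (p.1, a) (q.1, a')) p.2 q.2 = _
    have h : (Matrix.of fun a a' => (X + Y) (p.1, a) (q.1, a'))
        = (Matrix.of fun a a' => X (p.1, a) (q.1, a'))
          + (Matrix.of fun a a' => Y (p.1, a) (q.1, a')) := rfl
    rw [h, map_add]; rfl
  map_smul' c X := by
    ext p q
    show N (Matrix.of fun a a' => (c • X) (p.1, a) (q.1, a')) p.2 q.2 = _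
    have h : (Matrix.of fun a a' => (c • X) (p.1, a) (q.1, a'))
        = c • (Matrix.of fun a a' => X (p.1, a) (q.1, a')) := rfl
    rw [h, map_smul]; rfl

/-- The Kronecker extension `N ⊗ id_R`. -/
def tensorId (R : Type*) {A B : Type*} (N : MatC A →ₗ[ℂ] MatC B) :
    MatC (A × R) →ₗ[ℂ] MatC (B × R) where
  toFun X := Matrix.of fun p q => N (Matrix.of fun a a' => X (a, p.2) (a', q.2)) p.1 q.1
  map_add' X Y := by
    ext p q
    show N (Matrix.of fun a a' => (X + Y) (a, p.2) (a', q.2)) p.1 q.1 = _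
    have h : (Matrix.of fun a a' => (X + Y) (a, p.2) (a', q.2))
        = (Matrix.of fun a a' => X (a, p.2) (a', q.2))
          + (Matrix.of fun a a' => Y (a, p.2) (a', q.2)) := rfl
    rw [h, map_add]; rfl
  map_smul' c X := by
    ext p q
    show N (Matrix.of fun a a' => (c • X) (a, p.2) (a', q.2)) p.1 q.1 = _
    have h : (Matrix.of fun a a' => (c • X) (a, p.2) (a', q.2))
        = c • (Matrix.of fun a a' => X (a, p.2) (a', q.2)) := rfl
    rw [h, map_smul]; rfl

/-- Transport of a matrix map along equivalences of index types. -/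
def reindexChan {A A' B B' : Type*} (eA : A ≃ A') (eB : B ≃ B')
    (N : MatC A →ₗ[ℂ] MatC B) : MatC A' →ₗ[ℂ] MatC B' :=
  (Matrix.reindexLinearEquiv ℂ ℂ eB eB).toLinearMap ∘ₗ N ∘ₗ
    (Matrix.reindexLinearEquiv ℂ ℂ eA.symm eA.symm).toLinearMap

/-- The tensor product `N ⊗ M` of two matrix maps. -/
def tensorChan {A B C D : Type*} (N : MatC A →ₗ[ℂ] MatC B) (M : MatC C →ₗ[ℂ] MatC D) :
    MatC (A × C) →ₗ[ℂ] MatC (B × D) :=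
  tensorId D N ∘ₗ idTensor A M

/-- The `n`-fold tensor power `N^{⊗n}` of a matrix map, acting on matrices
indexed by `Fin n → A`. -/
def powChan {A B : Type*} (N : MatC A →ₗ[ℂ] MatC B) :
    (n : ℕ) → (MatC (Fin n → A) →ₗ[ℂ] MatC (Fin n → B))
  | 0 => reindexChan (Equiv.refl _) (Equiv.ofUnique (Fin 0 → A) (Fin 0 → B)) LinearMap.id
  | n + 1 =>
      reindexChan (Fin.insertNthEquiv (fun _ => A) 0) (Fin.insertNthEquiv (fun _ => B) 0)
        (tensorChan N (powChan N n))

/-- Complete positivity and trace preservation (a quantum channel). -/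
def IsCPTP {A B : Type*} [Fintype A] [Fintype B] (N : MatC A →ₗ[ℂ] MatC B) : Prop :=
  (∀ (R : Type) (fR : Fintype R) (X : MatC (R × A)),
      letI := fR
      X.PosSemidef → (idTensor R N X).PosSemidef) ∧
    ∀ X : MatC A, (N X).trace = X.trace

/-- The (unnormalized) maximally entangled projector `|Φ⟩⟨Φ|`. -/
def maxEnt (A : Type*) [DecidableEq A] : MatC (A × A) :=
  Matrix.of fun p q => (if p.1 = p.2 then (1 : ℂ) else 0) * (if q.1 = q.2 then 1 else 0)

/-- The Choi matrix `J_N = (id_A ⊗ N)(|Φ⟩⟨Φ|)`. -/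
def choiMat {A B : Type*} [DecidableEq A] (N : MatC A →ₗ[ℂ] MatC B) : MatC (A × B) :=
  idTensor A N (maxEnt A)

/-! ### State divergences -/

/-- The set of achievable Type II error values for tests with Type I error at most `ε`. -/
def betaSet {ι : Type*} [Fintype ι] [DecidableEq ι] (ε : ℝ) (ρ σ : MatC ι) : Set ℝ :=
  {x | ∃ T : MatC ι, T.PosSemidef ∧ (1 - T).PosSemidef ∧
    1 - ε ≤ ((T * ρ).trace).re ∧ x = ((T * σ).trace).re}

/-- The hypothesis testing relative entropy `D_H^ε(ρ‖σ)`, valued in extended reals. -/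
def DHe {ι : Type*} [Fintype ι] [DecidableEq ι] (ε : ℝ) (ρ σ : MatC ι) : EReal :=
  negLog2 (sInf (betaSet ε ρ σ))

/-- The Umegaki relative entropy `D(ρ‖σ)` (base 2), `+∞` if the support condition fails. -/
def relEnt {ι : Type*} [Fintype ι] [DecidableEq ι] (ρ σ : MatC ι) : EReal :=
  if SuppLe ρ σ then (((ρ * (matLog2 ρ - matLog2 σ)).trace).re : EReal) else ⊤

/-- The Petz Rényi divergence `D̄_α(ρ‖σ)` for `α ∈ (0,1)`, `+∞` when
`tr[ρ^α σ^{1−α}] = 0`. -/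
def petzD (α : ℝ) {ι : Type*} [Fintype ι] [DecidableEq ι] (ρ σ : MatC ι) : EReal :=
  if 0 < (((matPow ρ α * matPow σ (1 - α)).trace).re) then
    (((α - 1)⁻¹ * Real.logb 2 (((matPow ρ α * matPow σ (1 - α)).trace).re) : ℝ) : EReal)
  else ⊤

/-- The sandwiched Rényi divergence `D̃_α(ρ‖σ)` for `α > 1`. -/
def sandD (α : ℝ) {ι : Type*} [Fintype ι] [DecidableEq ι] (ρ σ : MatC ι) : EReal :=
  if SuppLe ρ σ then
    ((((α - 1)⁻¹ *
        Real.logb 2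
          (((matPow (matPow σ ((1 - α) / (2 * α)) * ρ * matPow σ ((1 - α) / (2 * α))) α).trace).re)) : ℝ) : EReal)
  else ⊤

/-- The max-relative entropy `D_max(ρ‖σ)`. -/
def Dmax {ι : Type*} [Fintype ι] (ρ σ : MatC ι) : EReal :=
  sInf {y : EReal | ∃ t : ℝ, ((t : ℂ) • σ - ρ).PosSemidef ∧ y = ((Real.logb 2 t : ℝ) : EReal)}

/-- Trace norm `‖X‖₁ = tr √(X†X)`. -/
def traceNorm {ι : Type*} [Fintype ι] [DecidableEq ι] (X : MatC ι) : ℝ :=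
  ((matPow (X.conjTranspose * X) 2⁻¹).trace).re

/-- Generalized fidelity of subnormalized states. -/
def genFid {ι : Type*} [Fintype ι] [DecidableEq ι] (ρ σ : MatC ι) : ℝ :=
  traceNorm (matPow ρ 2⁻¹ * matPow σ 2⁻¹) +
    Real.sqrt ((1 - (ρ.trace).re) * (1 - (σ.trace).re))

/-- Purified distance. -/
def purDist {ι : Type*} [Fintype ι] [DecidableEq ι] (ρ σ : MatC ι) : ℝ :=
  Real.sqrt (1 - (genFid ρ σ) ^ 2)

/-- The smooth max-relative entropy `D_max^ε(ρ‖σ)`. -/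
def DmaxSmooth (ε : ℝ) {ι : Type*} [Fintype ι] [DecidableEq ι] (ρ σ : MatC ι) : EReal :=
  sInf {y : EReal | ∃ ρ' : MatC ι, ρ'.PosSemidef ∧ ((ρ'.trace).re ≤ 1) ∧
    purDist ρ' ρ ≤ ε ∧ y = Dmax ρ' σ}

/-! ### Channel divergences -/

/-- A generalized state divergence: a function on pairs of matrices over every
finite system. -/
abbrev StateDiv :=
  ∀ (ι : Type) (_ : Fintype ι) (_ : DecidableEq ι), MatC ι → MatC ι → EReal

/-- The Umegaki relative entropy as a `StateDiv`. -/
def UmegakiD : StateDiv := fun ι fι dι ρ σ => @relEnt ι fι dι ρ σ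

/-- The sandwiched Rényi divergence as a `StateDiv`. -/
def SandD (α : ℝ) : StateDiv := fun ι fι dι ρ σ => @sandD α ι fι dι ρ σ

/-- The Petz Rényi divergence as a `StateDiv`. -/
def PetzD (α : ℝ) : StateDiv := fun ι fι dι ρ σ => @petzD α ι fι dι ρ σ

/-- The smooth max-relative entropy as a `StateDiv`. -/
def DmaxD (ε : ℝ) : StateDiv := fun ι fι dι ρ σ => @DmaxSmooth ε ι fι dι ρ σ

/-- The hypothesis-testing relative entropy as a `StateDiv`. -/
def DHD (ε : ℝ) : StateDiv := fun ι fι dι ρ σ => @DHe ι fι dι ε ρ σ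

/-- The channel divergence induced by a state divergence: supremum over all
finite reference systems `R` and input states `ψ` on `R × A`. -/
def chanDiv (D : StateDiv) {A B : Type} [Fintype A] [Fintype B] [DecidableEq B]
    (N M : MatC A →ₗ[ℂ] MatC B) : EReal :=
  sSup {x : EReal | ∃ (R : Type) (fR : Fintype R) (dR : DecidableEq R)
    (ψ : MatC (R × A)),
      letI := fR; letI := dR;
      IsDensity ψ ∧
        x = D (R × B) inferInstance inferInstance (idTensor R N ψ) (idTensor R M ψ)}

/-- The regularized channel divergence `sup_{n ≥ 1} (1/n) D(N^{⊗n}‖M^{⊗n})`. -/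
def regChanDiv (D : StateDiv) {A B : Type} [Fintype A] [Fintype B] [DecidableEq B]
    (N M : MatC A →ₗ[ℂ] MatC B) : EReal :=
  sSup {x : EReal | ∃ n : ℕ, 1 ≤ n ∧
    x = (((n : ℝ)⁻¹ : ℝ) : EReal) * chanDiv D (powChan N n) (powChan M n)}

/-- The amortized channel divergence. -/
def amortChanDiv (D : StateDiv) {A B : Type} [Fintype A] [Fintype B] [DecidableEq A]
    [DecidableEq B] (N M : MatC A →ₗ[ℂ] MatC B) : EReal :=
  sSup {x : EReal | ∃ (R : Type) (fR : Fintype R) (dR : DecidableEq R)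
    (ψ φ : MatC (R × A)),
      letI := fR; letI := dR;
      IsDensity ψ ∧ IsDensity φ ∧
        x = D (R × B) inferInstance inferInstance (idTensor R N ψ) (idTensor R M φ)
            - D (R × A) inferInstance inferInstance ψ φ}


/-! ### Discrimination strategies -/

/-- Tensor product of matrices over a (dependent) family of systems. -/
def piKron {n : ℕ} {κ : Fin n → Type} (X : ∀ i, MatC (κ i)) : MatC (∀ i, κ i) :=
  Matrix.of fun f g => ∏ i, X i (f i) (g i)

/-- A coherent (parallel) strategy for discriminating `n` uses of channels
`A → B`: a reference system `R`, an input state on `R × A^n` and a binary test. -/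
structure CohStrategy (A B : Type) [Fintype A] [DecidableEq A] [Fintype B] [DecidableEq B]
    (n : ℕ) where
  R : Type
  [fR : Fintype R]
  [dR : DecidableEq R]
  ψ : MatC (R × (Fin n → A))
  hψ : IsDensity ψ
  T : MatC (R × (Fin n → B))
  hT₁ : T.PosSemidef
  hT₂ : (1 - T).PosSemidef

attribute [instance] CohStrategy.fR CohStrategy.dR

/-- Type I error of a coherent strategy against the null hypothesis channel `N`. -/
def CohStrategy.typeI {A B : Type} [Fintype A] [DecidableEq A] [Fintype B] [DecidableEq B]
    {n : ℕ} (N : MatC A →ₗ[ℂ] MatC B) (S : CohStrategy A B n) : ℝ :=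
  (((1 - S.T) * idTensor S.R (powChan N n) S.ψ).trace).re

/-- Type II error of a coherent strategy against the alternative channel `M`. -/
def CohStrategy.typeII {A B : Type} [Fintype A] [DecidableEq A] [Fintype B] [DecidableEq B]
    {n : ℕ} (M : MatC A →ₗ[ℂ] MatC B) (S : CohStrategy A B n) : ℝ :=
  ((S.T * idTensor S.R (powChan M n) S.ψ).trace).re

/-- **Conjecture 1** (exponentially strong converse of channel hypothesis testing
under coherent strategies). -/
def Conjecture1 : Prop :=
  ∀ (A B : Type) (fA : Fintype A) (dA : DecidableEq A) (fB : Fintype B) (dB : DecidableEq B),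
    letI := fA; letI := dA; letI := fB; letI := dB;
    ∀ (N M : MatC A →ₗ[ℂ] MatC B), IsCPTP N → IsCPTP M → (choiMat N).PosDef →
      ∀ S : (n : ℕ) → CohStrategy A B n,
        regChanDiv UmegakiD N M <
          Filter.liminf
            (fun n : ℕ => -((((n : ℝ)⁻¹ : ℝ) : EReal) * elog2 ((S n).typeII M)))
            Filter.atTop →
        ∃ c : ℝ, 0 < c ∧ ∀ᶠ n : ℕ in Filter.atTop,
          1 - (S n).typeI N ≤ (2 : ℝ) ^ (-(c * n))


/-- A sequential (adaptive) strategy for discriminating `m + 1` uses of channels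
`A → B`: reference systems `R 0, …, R m`, an initial state on `R 0 × A`, adaptive
update channels `P i : R i × B → R (i+1) × A`, and a final binary test. -/
structure SeqStrategy (A B : Type) [Fintype A] [DecidableEq A] [Fintype B] [DecidableEq B]
    (m : ℕ) where
  R : Fin (m + 1) → Type
  [fR : ∀ i, Fintype (R i)]
  [dR : ∀ i, DecidableEq (R i)]
  ψ : MatC (R 0 × A)
  hψ : IsDensity ψ
  P : ∀ i : Fin m, MatC (R i.castSucc × B) →ₗ[ℂ] MatC (R i.succ × A)
  hP : ∀ i, IsCPTP (P i)
  T : MatC (R (Fin.last m) × B)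
  hT₁ : T.PosSemidef
  hT₂ : (1 - T).PosSemidef

attribute [instance] SeqStrategy.fR SeqStrategy.dR

/-- The intermediate testing states of a sequential strategy when the unknown
channel is `N`: after `i + 1` uses of the channel, on system `R i × B`. -/
def SeqStrategy.states {A B : Type} [Fintype A] [DecidableEq A] [Fintype B] [DecidableEq B]
    {m : ℕ} (S : SeqStrategy A B m) (N : MatC A →ₗ[ℂ] MatC B) :
    ∀ i : Fin (m + 1), MatC (S.R i × B) :=
  Fin.induction (idTensor (S.R 0) N S.ψ)
    (fun i prev => idTensor (S.R i.succ) N (S.P i prev))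

/-- The final testing state of a sequential strategy for channel `N`. -/
def SeqStrategy.finalState {A B : Type} [Fintype A] [DecidableEq A] [Fintype B]
    [DecidableEq B] {m : ℕ} (S : SeqStrategy A B m) (N : MatC A →ₗ[ℂ] MatC B) :
    MatC (S.R (Fin.last m) × B) :=
  S.states N (Fin.last m)

/-- Type I error of a sequential strategy against the null hypothesis channel `N`. -/
def SeqStrategy.typeI {A B : Type} [Fintype A] [DecidableEq A] [Fintype B] [DecidableEq B]
    {m : ℕ} (N : MatC A →ₗ[ℂ] MatC B) (S : SeqStrategy A B m) : ℝ :=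
  (((1 - S.T) * S.finalState N).trace).re

/-- Type II error of a sequential strategy against the alternative channel `M`. -/
def SeqStrategy.typeII {A B : Type} [Fintype A] [DecidableEq A] [Fintype B] [DecidableEq B]
    {m : ℕ} (M : MatC A →ₗ[ℂ] MatC B) (S : SeqStrategy A B m) : ℝ :=
  ((S.T * S.finalState M).trace).re

/-- A product strategy for discriminating `n` uses of channels `A → B`:
reference systems `R i`, product input states `φ i` on `R i × A`, and a binary
test on the joint output. -/
structure ProdStrategy (A B : Type) [Fintype A] [DecidableEq A] [Fintype B] [DecidableEq B]
    (n : ℕ) where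
  R : Fin n → Type
  [fR : ∀ i, Fintype (R i)]
  [dR : ∀ i, DecidableEq (R i)]
  φ : ∀ i, MatC (R i × A)
  hφ : ∀ i, IsDensity (φ i)
  T : MatC (∀ i, R i × B)
  hT₁ : T.PosSemidef
  hT₂ : (1 - T).PosSemidef

attribute [instance] ProdStrategy.fR ProdStrategy.dR

/-- The testing state of a product strategy for channel `N`. -/
def ProdStrategy.state {A B : Type} [Fintype A] [DecidableEq A] [Fintype B] [DecidableEq B]
    {n : ℕ} (S : ProdStrategy A B n) (N : MatC A →ₗ[ℂ] MatC B) : MatC (∀ i, S.R i × B) :=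
  piKron fun i => idTensor (S.R i) N (S.φ i)

/-- Type I error of a product strategy against the null hypothesis channel `N`. -/
def ProdStrategy.typeI {A B : Type} [Fintype A] [DecidableEq A] [Fintype B] [DecidableEq B]
    {n : ℕ} (N : MatC A →ₗ[ℂ] MatC B) (S : ProdStrategy A B n) : ℝ :=
  (((1 - S.T) * S.state N).trace).re

/-- Type II error of a product strategy against the alternative channel `M`. -/
def ProdStrategy.typeII {A B : Type} [Fintype A] [DecidableEq A] [Fintype B] [DecidableEq B]
    {n : ℕ} (M : MatC A →ₗ[ℂ] MatC B) (S : ProdStrategy A B n) : ℝ :=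
  ((S.T * S.state M).trace).re

/-- Extra: the `n`-fold power of a channel acting on matrices indexed by
`Fin n → R × A` (reference `R` paired with each channel input). -/
noncomputable def pairPow (R : Type) {A B : Type} (N : MatC A →ₗ[ℂ] MatC B) (n : ℕ) :
    MatC (Fin n → R × A) →ₗ[ℂ] MatC (Fin n → R × B) :=
  reindexChan (Equiv.arrowProdEquivProdArrow (Fin n) (fun _ => R) (fun _ => A)).symm
    (Equiv.arrowProdEquivProdArrow (Fin n) (fun _ => R) (fun _ => B)).symm
    (idTensor (Fin n → R) (powChan N n))

/-- The optimal hypothesis-testing relative entropy over product strategies. -/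
noncomputable def DHpro (ε : ℝ) {A B : Type} [Fintype A] [DecidableEq A] [Fintype B]
    [DecidableEq B] (N M : MatC A →ₗ[ℂ] MatC B) (n : ℕ) : EReal :=
  sSup {x : EReal | ∃ (R : Fin n → Type) (fR : ∀ i, Fintype (R i))
    (dR : ∀ i, DecidableEq (R i)) (φ : ∀ i, MatC (R i × A)),
      letI := fR; letI := dR;
      (∀ i, IsDensity (φ i)) ∧
        x = DHe ε (piKron fun i => idTensor (R i) N (φ i))
              (piKron fun i => idTensor (R i) M (φ i))}

/-- The optimal hypothesis-testing relative entropy over sequential strategies for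
`m + 1` channel uses. -/
noncomputable def DHseq (ε : ℝ) {A B : Type} [Fintype A] [DecidableEq A] [Fintype B]
    [DecidableEq B] (N M : MatC A →ₗ[ℂ] MatC B) (m : ℕ) : EReal :=
  sSup {x : EReal | ∃ S : SeqStrategy A B m,
    x = DHe ε (S.finalState N) (S.finalState M)}

/-- The strong converse exponent of channel discrimination under product strategies. -/
noncomputable def scExpPRO (r : ℝ) {A B : Type} [Fintype A] [DecidableEq A] [Fintype B]
    [DecidableEq B] (N M : MatC A →ₗ[ℂ] MatC B) : EReal :=
  sInf {e : EReal | ∃ S : (n : ℕ) → ProdStrategy A B n,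
    (Filter.limsup (fun n : ℕ => (((n : ℝ)⁻¹ : ℝ) : EReal) * elog2 ((S n).typeII M))
        Filter.atTop ≤ ((-r : ℝ) : EReal)) ∧
    e = -Filter.liminf (fun n : ℕ => (((n : ℝ)⁻¹ : ℝ) : EReal) * elog2 (1 - (S n).typeI N))
        Filter.atTop}

/-- The error exponent of channel discrimination under product strategies. -/
noncomputable def erExpPRO (r : ℝ) {A B : Type} [Fintype A] [DecidableEq A] [Fintype B]
    [DecidableEq B] (N M : MatC A →ₗ[ℂ] MatC B) : EReal :=
  sSup {e : EReal | ∃ S : (n : ℕ) → ProdStrategy A B n,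
    (Filter.limsup (fun n : ℕ => (((n : ℝ)⁻¹ : ℝ) : EReal) * elog2 ((S n).typeII M))
        Filter.atTop ≤ ((-r : ℝ) : EReal)) ∧
    e = -Filter.limsup (fun n : ℕ => (((n : ℝ)⁻¹ : ℝ) : EReal) * elog2 ((S n).typeI N))
        Filter.atTop}

/-- The error exponent of channel discrimination under coherent strategies. -/
noncomputable def erExpCOH (r : ℝ) {A B : Type} [Fintype A] [DecidableEq A] [Fintype B]
    [DecidableEq B] (N M : MatC A →ₗ[ℂ] MatC B) : EReal :=
  sSup {e : EReal | ∃ S : (n : ℕ) → CohStrategy A B n,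
    (Filter.limsup (fun n : ℕ => (((n : ℝ)⁻¹ : ℝ) : EReal) * elog2 ((S n).typeII M))
        Filter.atTop ≤ ((-r : ℝ) : EReal)) ∧
    e = -Filter.limsup (fun n : ℕ => (((n : ℝ)⁻¹ : ℝ) : EReal) * elog2 ((S n).typeI N))
        Filter.atTop}

/-!
Purify `ψ = w wᴴ` with purifying system `(R × A)ⁿ`, one coordinate per channel use, and give the
`j`-th copy of `R × A` the reference `(rⱼ, eⱼ, j)`. Symmetrizing over all permutations of the copies
gives a symmetric unit vector `φ`: the labels `j` make the `n!` permuted terms orthogonal. Reading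
off the labels, undoing the permutation and discarding the purification is an isometry followed by
a partial trace on the reference alone, so it commutes with `N^{⊗n}` for every `N` and maps
`(id ⊗ N^{⊗n})(φφ*)` to `(id ⊗ N^{⊗n})(ψ)`. Its adjoint turns every test for the `ψ`-pair into a
test for the `φ`-pair with the same error probabilities, so the set of achievable type II errors
only grows.
-/

open Matrix

section ChoiMatrix

variable {A B C D : Type*}

lemma choiMat_apply [DecidableEq A] (N : MatC A →ₗ[ℂ] MatC B) (a a' : A) (b b' : B) :
    choiMat N (a, b) (a', b') = N (single a a' 1) b b' := by
  have h : (of fun x x' => maxEnt A (a, x) (a', x')) = single a a' (1 : ℂ) := by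
    ext x x'
    simp only [maxEnt, of_apply, single_apply, ite_mul, one_mul, zero_mul, ite_and]
  exact congrFun (congrFun (congrArg N h) b) b'

lemma apply_eq_sum_choiMat [Fintype A] [DecidableEq A] (N : MatC A →ₗ[ℂ] MatC B) (Y : MatC A)
    (b b' : B) : N Y b b' = ∑ a, ∑ a', Y a a' * choiMat N (a, b) (a', b') := by
  conv_lhs => rw [matrix_eq_sum_single Y]
  simp only [map_sum, Matrix.sum_apply, choiMat_apply]
  refine Finset.sum_congr rfl fun a _ => Finset.sum_congr rfl fun a' _ => ?_
  rw [show single a a' (Y a a') = Y a a' • single a a' 1 by rw [smul_single, smul_eq_mul, mul_one],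
    map_smul, Matrix.smul_apply, smul_eq_mul]

lemma idTensor_kronecker {R : Type*} (N : MatC A →ₗ[ℂ] MatC B) (X : MatC R) (Y : MatC A) :
    idTensor R N (X ⊗ₖ Y) = X ⊗ₖ N Y := by
  ext ⟨r, b⟩ ⟨r', b'⟩
  show N (X r r' • Y) b b' = X r r' * N Y b b'
  rw [map_smul, Matrix.smul_apply, smul_eq_mul]

lemma tensorId_kronecker {R : Type*} (N : MatC A →ₗ[ℂ] MatC B) (Y : MatC A) (X : MatC R) :
    tensorId R N (Y ⊗ₖ X) = N Y ⊗ₖ X := by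
  ext ⟨b, r⟩ ⟨b', r'⟩
  have h : (of fun a a' => (Y ⊗ₖ X) (a, r) (a', r')) = X r r' • Y := by
    ext a a'
    exact mul_comm _ _
  show N (of fun a a' => (Y ⊗ₖ X) (a, r) (a', r')) b b' = N Y b b' * X r r'
  rw [h, map_smul, Matrix.smul_apply, smul_eq_mul, mul_comm]

lemma tensorChan_kronecker (N : MatC A →ₗ[ℂ] MatC B) (M : MatC C →ₗ[ℂ] MatC D) (Y : MatC A)
    (Z : MatC C) : tensorChan N M (Y ⊗ₖ Z) = N Y ⊗ₖ M Z := by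
  simp only [tensorChan, LinearMap.comp_apply, idTensor_kronecker, tensorId_kronecker]

lemma choiMat_tensorChan_apply [DecidableEq A] [DecidableEq C] (N : MatC A →ₗ[ℂ] MatC B)
    (M : MatC C →ₗ[ℂ] MatC D) (a a' : A) (b b' : B) (c c' : C) (d d' : D) :
    choiMat (tensorChan N M) ((a, c), (b, d)) ((a', c'), (b', d')) =
      choiMat N (a, b) (a', b') * choiMat M (c, d) (c', d') := by
  rw [choiMat_apply, ← mul_one (1 : ℂ), ← single_kronecker_single, tensorChan_kronecker,
    kroneckerMap_apply, choiMat_apply, choiMat_apply]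

lemma choiMat_reindexChan_apply {A' B' : Type*} [DecidableEq A] [DecidableEq A'] (eA : A ≃ A')
    (eB : B ≃ B') (N : MatC A →ₗ[ℂ] MatC B) (a a' : A') (b b' : B') :
    choiMat (reindexChan eA eB N) (a, b) (a', b') =
      choiMat N (eA.symm a, eB.symm b) (eA.symm a', eB.symm b') := by
  simp [choiMat_apply, reindexChan]

lemma Fin.insertNthEquiv_zero_symm_apply {n : ℕ} (a : Fin (n + 1) → A) :
    (Fin.insertNthEquiv (fun _ => A) 0).symm a = (a 0, Fin.tail a) :=
  Prod.ext rfl (Fin.removeNth_zero a)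

lemma choiMat_powChan_apply [DecidableEq A] (N : MatC A →ₗ[ℂ] MatC B) :
    ∀ (n : ℕ) (a a' : Fin n → A) (b b' : Fin n → B),
      choiMat (powChan N n) (a, b) (a', b') = ∏ i, choiMat N (a i, b i) (a' i, b' i)
  | 0, a, a', b, b' => by
    rw [powChan, choiMat_reindexChan_apply, choiMat_apply, Fin.prod_univ_zero]
    simp [Subsingleton.elim _ a]
  | n + 1, a, a', b, b' => by
    rw [powChan, choiMat_reindexChan_apply]
    simp only [Fin.insertNthEquiv_zero_symm_apply]
    rw [choiMat_tensorChan_apply, choiMat_powChan_apply N n, Fin.prod_univ_succ]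
    rfl

end ChoiMatrix

section Entries

variable {A B : Type} [Fintype A] [DecidableEq A]

lemma idTensor_powChan_apply {R : Type*} {n : ℕ} (N : MatC A →ₗ[ℂ] MatC B)
    (X : MatC (R × (Fin n → A))) (r r' : R) (b b' : Fin n → B) :
    idTensor R (powChan N n) X (r, b) (r', b') =
      ∑ a, ∑ a', X (r, a) (r', a') * ∏ i, choiMat N (a i, b i) (a' i, b' i) := by
  simp only [idTensor, LinearMap.coe_mk, AddHom.coe_mk, of_apply, apply_eq_sum_choiMat,
    choiMat_powChan_apply]

lemma pairPow_apply {R : Type} [Fintype R] {n : ℕ} (N : MatC A →ₗ[ℂ] MatC B)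
    (X : MatC (Fin n → R × A)) (f g : Fin n → R × B) :
    pairPow R N n X f g =
      ∑ a : Fin n → A, ∑ a' : Fin n → A, X (fun i => ((f i).1, a i)) (fun i => ((g i).1, a' i)) *
        ∏ i, choiMat N (a i, (f i).2) (a' i, (g i).2) := by
  simp only [pairPow, reindexChan, LinearMap.coe_comp, Function.comp_apply, LinearEquiv.coe_coe,
    coe_reindexLinearEquiv, reindex_apply, submatrix_apply, Equiv.symm_symm]
  exact idTensor_powChan_apply N _ _ _ _ _

end Entries

section TracePreservation

variable {A B : Type*} (N : MatC A →ₗ[ℂ] MatC B)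

lemma trace_reindex {ι κ : Type*} [Fintype ι] [Fintype κ] (e : ι ≃ κ) (X : MatC ι) :
    (reindex e e X).trace = X.trace :=
  e.symm.sum_comp fun i => X i i

variable [Fintype A] [Fintype B]

lemma trace_idTensor (hN : ∀ X, (N X).trace = X.trace) {R : Type*} [Fintype R]
    (X : MatC (R × A)) :
    (idTensor R N X).trace = X.trace := by
  simp only [trace, diag, Fintype.sum_prod_type]
  exact Finset.sum_congr rfl fun r _ => hN (of fun a a' => X (r, a) (r, a'))

lemma trace_tensorId (hN : ∀ X, (N X).trace = X.trace) {R : Type*} [Fintype R]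
    (X : MatC (A × R)) :
    (tensorId R N X).trace = X.trace := by
  simp only [trace, diag, Fintype.sum_prod_type_right]
  exact Finset.sum_congr rfl fun r _ => hN (of fun a a' => X (a, r) (a', r))

lemma trace_powChan (hN : ∀ X, (N X).trace = X.trace) :
    ∀ (n : ℕ) (X : MatC (Fin n → A)), (powChan N n X).trace = X.trace
  | 0, X => by
    simp only [powChan, reindexChan, LinearMap.coe_comp, Function.comp_apply,
      LinearEquiv.coe_coe, coe_reindexLinearEquiv, LinearMap.id_apply, trace_reindex]
  | n + 1, X => by
    simp only [powChan, reindexChan, tensorChan, LinearMap.coe_comp, Function.comp_apply,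
      LinearEquiv.coe_coe, coe_reindexLinearEquiv, trace_reindex, trace_tensorId N hN,
      trace_idTensor _ (trace_powChan hN n)]

end TracePreservation

section Tests

variable {ι : Type*} [Fintype ι] [DecidableEq ι]

def IsTest (T : MatC ι) : Prop :=
  T.PosSemidef ∧ (1 - T).PosSemidef

lemma IsTest.kronecker_one {T : MatC ι} (hT : IsTest T) (K : Type*) [Fintype K] [DecidableEq K] :
    IsTest (T ⊗ₖ (1 : MatC K)) := by
  refine ⟨hT.1.kronecker PosSemidef.one, ?_⟩
  have h : 1 - T ⊗ₖ (1 : MatC K) = (1 - T) ⊗ₖ 1 := by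
    rw [eq_comm, eq_sub_iff_add_eq, ← add_kronecker, sub_add_cancel, one_kronecker_one]
  rw [h]
  exact hT.2.kronecker PosSemidef.one

lemma IsTest.conj_isometry {κ : Type*} [Fintype κ] [DecidableEq κ] {T : MatC κ}
    (hT : IsTest T) {V : Matrix ι κ ℂ} (hV : Vᴴ * V = 1) : IsTest (V * T * Vᴴ) := by
  refine ⟨hT.1.mul_mul_conjTranspose_same V, ?_⟩
  -- `1 - V Vᴴ` is an orthogonal projection, hence its own Gram matrix
  have hP : 1 - V * T * Vᴴ = (1 - V * Vᴴ)ᴴ * (1 - V * Vᴴ) + V * (1 - T) * Vᴴ := by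
    simp only [conjTranspose_sub, conjTranspose_one, conjTranspose_mul, conjTranspose_conjTranspose,
      Matrix.sub_mul, Matrix.mul_sub, Matrix.one_mul, Matrix.mul_one, Matrix.mul_assoc,
      ← Matrix.mul_assoc Vᴴ V, hV]
    abel
  rw [hP]
  exact (posSemidef_conjTranspose_mul_self _).add (hT.2.mul_mul_conjTranspose_same V)

end Tests

section HypothesisTesting

variable {P Y : Type*} [Fintype P] [Fintype Y] [DecidableEq Y]

lemma trace_kronecker_one_mul {K : Type*} [Fintype K] [DecidableEq K] (T : MatC P)
    (Z : MatC (P × K)) :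
    (T ⊗ₖ (1 : MatC K) * Z).trace = (T * of fun p q => ∑ k, Z (p, k) (q, k)).trace := by
  simp only [trace, diag_apply, mul_apply, kroneckerMap_apply, one_apply, mul_ite, mul_one,
    mul_zero, ite_mul, zero_mul, Fintype.sum_prod_type, Finset.sum_ite_eq, Finset.mem_univ,
    if_true, of_apply, Finset.mul_sum]
  exact Finset.sum_congr rfl fun p _ => Finset.sum_comm

lemma trace_conj_kronecker_one_mul {K : Type*} [Fintype K] [DecidableEq K] (ι : P × K → Y)
    (T : MatC P) (Z : MatC Y) :
    ((1 : MatC Y).submatrix id ι * (T ⊗ₖ (1 : MatC K)) * ((1 : MatC Y).submatrix id ι)ᴴ * Z).trace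
      = (T * of fun p q => ∑ k, Z (ι (p, k)) (ι (q, k))).trace := by
  set V := (1 : MatC Y).submatrix id ι
  have hVZV : Vᴴ * Z * V = Z.submatrix ι ι := by
    ext a b
    simp [V, mul_apply, one_apply]
  calc (V * (T ⊗ₖ (1 : MatC K)) * Vᴴ * Z).trace
      = ((T ⊗ₖ (1 : MatC K)) * (Vᴴ * Z * V)).trace := by
        rw [Matrix.mul_assoc, Matrix.mul_assoc, trace_mul_comm, Matrix.mul_assoc, Matrix.mul_assoc]
    _ = (T * of fun p q => ∑ k, Z (ι (p, k)) (ι (q, k))).trace := by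
        rw [hVZV, trace_kronecker_one_mul]
        rfl

lemma betaSet_subset_of_partialTrace [DecidableEq P] {K : Type*} [Fintype K] [DecidableEq K]
    {ι : P × K → Y} (hι : Function.Injective ι) {ε : ℝ} {ρ σ : MatC P} {ρ' σ' : MatC Y}
    (hρ : ∀ p q, ∑ k, ρ' (ι (p, k)) (ι (q, k)) = ρ p q)
    (hσ : ∀ p q, ∑ k, σ' (ι (p, k)) (ι (q, k)) = σ p q) :
    betaSet ε ρ σ ⊆ betaSet ε ρ' σ' := by
  rintro _ ⟨T, hT₀, hT₁, hTρ, rfl⟩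
  have hV : ((1 : MatC Y).submatrix id ι)ᴴ * (1 : MatC Y).submatrix id ι = 1 := by
    rw [conjTranspose_submatrix, conjTranspose_one,
      ← submatrix_mul _ _ _ _ _ Function.bijective_id, Matrix.mul_one, submatrix_one _ hι]
  obtain ⟨h₀, h₁⟩ := (IsTest.kronecker_one ⟨hT₀, hT₁⟩ K).conj_isometry hV
  have eρ : (of fun p q => ∑ k, ρ' (ι (p, k)) (ι (q, k))) = ρ := ext hρ
  have eσ : (of fun p q => ∑ k, σ' (ι (p, k)) (ι (q, k))) = σ := ext hσ
  refine ⟨_, h₀, h₁, ?_, ?_⟩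
  · rwa [trace_conj_kronecker_one_mul, eρ]
  · rw [trace_conj_kronecker_one_mul, eσ]

lemma betaSet_nonempty [DecidableEq P] {ε : ℝ} (hε : 0 ≤ ε) {ρ : MatC P} (hρ : ρ.trace = 1)
    (σ : MatC P) :
    (betaSet ε ρ σ).Nonempty :=
  ⟨_, 1, PosSemidef.one, by rw [sub_self]; exact PosSemidef.zero, by simp [hρ, hε], rfl⟩

lemma negLog2_antitone : Antitone negLog2 := by
  intro s t hst
  unfold negLog2
  split_ifs with ht hs hs
  · exact le_rfl
  · exact absurd (hst.trans ht) hs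
  · exact le_top
  · exact EReal.coe_le_coe_iff.2
      (neg_le_neg (Real.logb_le_logb_of_le one_lt_two (not_le.1 hs) hst))

lemma DHe_le_DHe_of_betaSet_subset [DecidableEq P] {ε : ℝ} {ρ σ : MatC P} {ρ' σ' : MatC Y}
    (hne : (betaSet ε ρ σ).Nonempty) (h : betaSet ε ρ σ ⊆ betaSet ε ρ' σ') :
    DHe ε ρ σ ≤ DHe ε ρ' σ' := by
  by_cases hbdd : BddBelow (betaSet ε ρ' σ')
  · exact negLog2_antitone (csInf_le_csInf hbdd hne h)
  · -- the junk infimum `0` of an unbounded set has `negLog2 0 = ⊤`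
    have htop : negLog2 0 = ⊤ := if_pos le_rfl
    rw [DHe, DHe, Real.sInf_of_not_bddBelow hbdd, htop]
    exact le_top

end HypothesisTesting

lemma Matrix.PosSemidef.exists_eq_mul_conjTranspose {ι κ : Type*} [Fintype ι] [DecidableEq ι]
    [Fintype κ] {ρ : MatC ι} (hρ : ρ.PosSemidef) (e : κ ≃ ι) : ∃ w : Matrix ι κ ℂ, ρ = w * wᴴ := by
  open scoped MatrixOrder Matrix.Norms.L2Operator in
  obtain ⟨B, hB⟩ := CStarAlgebra.nonneg_iff_eq_star_mul_self.mp hρ.nonneg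
  refine ⟨Bᴴ.submatrix id e, ?_⟩
  rw [conjTranspose_submatrix, conjTranspose_conjTranspose, submatrix_mul_equiv, submatrix_id_id,
    hB, star_eq_conjTranspose]

section Symmetrization

variable {R X : Type*} {n : ℕ}

def symEmbed {C : Type*} (p : (Fin n → R) × (Fin n → C)) (k : Equiv.Perm (Fin n) × (Fin n → X)) :
    Fin n → (R × X × Fin n) × C :=
  fun i => ((p.1 (k.1 i), k.2 (k.1 i), k.1 i), p.2 (k.1 i))

lemma symEmbed_comp_perm {C : Type*} (p : (Fin n → R) × (Fin n → C)) (σ : Equiv.Perm (Fin n))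
    (e : Fin n → X) (π : Equiv.Perm (Fin n)) :
    symEmbed p (σ, e) ∘ π = symEmbed p (π.trans σ, e) :=
  rfl

lemma injective_uncurry_symEmbed {C : Type*} :
    Function.Injective (Function.uncurry
      (symEmbed : (Fin n → R) × (Fin n → C) → _ → Fin n → (R × X × Fin n) × C)) := by
  rintro ⟨p, σ, e⟩ ⟨p', σ', e'⟩ h
  obtain rfl : σ = σ' := Equiv.ext fun i => congrArg (fun f => (f i).1.2.2) h
  have h' : ∀ j, ((p.1 j, e j, j), p.2 j) = ((p'.1 j, e' j, j), p'.2 j) := fun j => by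
    simpa [symEmbed] using congrFun h (σ.symm j)
  simp only [Prod.mk.injEq, and_true, true_and] at h' ⊢
  exact ⟨Prod.ext (funext fun j => (h' j).1.1) (funext fun j => (h' j).2),
    funext fun j => (h' j).1.2⟩

def symCoeff (n : ℕ) : ℂ :=
  ((Real.sqrt n.factorial)⁻¹ : ℝ)

lemma symCoeff_mul_star_symCoeff (n : ℕ) :
    symCoeff n * star (symCoeff n) = (n.factorial : ℂ)⁻¹ := by
  rw [symCoeff, Complex.star_def, Complex.conj_ofReal, ← Complex.ofReal_mul, ← mul_inv,
    Real.mul_self_sqrt (Nat.cast_nonneg _), Complex.ofReal_inv, Complex.ofReal_natCast]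

lemma normSq_symCoeff (n : ℕ) : Complex.normSq (symCoeff n) = (n.factorial : ℝ)⁻¹ := by
  rw [symCoeff, Complex.normSq_ofReal, ← mul_inv, Real.mul_self_sqrt (Nat.cast_nonneg _)]

variable {A : Type*}

-- `(n!)^{-1/2} ∑_σ σ·(w ⊗ labels)`, written as the extension by zero of `w` along `symEmbed`
def symVec (w : Matrix ((Fin n → R) × (Fin n → A)) (Fin n → X) ℂ) :
    (Fin n → (R × X × Fin n) × A) → ℂ :=
  Function.extend (Function.uncurry symEmbed)
    (fun y => symCoeff n * w y.1 y.2.2) 0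

lemma symVec_symEmbed (w : Matrix ((Fin n → R) × (Fin n → A)) (Fin n → X) ℂ)
    (p : (Fin n → R) × (Fin n → A)) (σ : Equiv.Perm (Fin n)) (e : Fin n → X) :
    symVec w (symEmbed p (σ, e)) = symCoeff n * w p e :=
  injective_uncurry_symEmbed.extend_apply _ _ (p, σ, e)

lemma symVec_of_notMem_range (w : Matrix ((Fin n → R) × (Fin n → A)) (Fin n → X) ℂ)
    {f : Fin n → (R × X × Fin n) × A} (hf : f ∉ Set.range (Function.uncurry symEmbed)) :
    symVec w f = 0 :=
  Function.extend_apply' _ _ _ hf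

lemma symVec_comp_perm (w : Matrix ((Fin n → R) × (Fin n → A)) (Fin n → X) ℂ)
    (π : Equiv.Perm (Fin n)) (f : Fin n → (R × X × Fin n) × A) :
    symVec w (f ∘ π) = symVec w f := by
  by_cases hf : f ∈ Set.range (Function.uncurry symEmbed)
  · obtain ⟨⟨p, σ, e⟩, rfl⟩ := hf
    rw [Function.uncurry_apply_pair, symEmbed_comp_perm, symVec_symEmbed, symVec_symEmbed]
  · have hfπ : f ∘ π ∉ Set.range (Function.uncurry symEmbed) := by
      rintro ⟨⟨p, σ, e⟩, h⟩
      refine hf ⟨(p, π.symm.trans σ, e), ?_⟩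
      rw [Function.uncurry_apply_pair] at h
      rw [Function.uncurry_apply_pair, ← symEmbed_comp_perm, h]
      ext1 i
      simp
    rw [symVec_of_notMem_range w hf, symVec_of_notMem_range w hfπ]

lemma sum_normSq_symVec [Fintype R] [Fintype X] [Fintype A]
    (w : Matrix ((Fin n → R) × (Fin n → A)) (Fin n → X) ℂ) :
    ∑ f, Complex.normSq (symVec w f) = ((w * wᴴ).trace).re := by
  rw [← Fintype.sum_of_injective _ injective_uncurry_symEmbed
      (fun y => Complex.normSq (symCoeff n * w y.1 y.2.2)) _
      (fun f hf => by rw [symVec_of_notMem_range w hf, map_zero])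
      (fun ⟨p, σ, e⟩ => by rw [Function.uncurry_apply_pair, symVec_symEmbed])]
  simp only [Complex.normSq_mul, normSq_symCoeff, Fintype.sum_prod_type, ← Finset.mul_sum,
    Finset.sum_const, Finset.card_univ, Fintype.card_perm, Fintype.card_fin, nsmul_eq_mul]
  rw [← mul_assoc, inv_mul_cancel₀ (Nat.cast_ne_zero.2 n.factorial_ne_zero), one_mul]
  simp [trace, mul_apply, Complex.mul_conj, Fintype.sum_prod_type, Complex.re_sum]

end Symmetrization

section PartialTrace

variable {R X A B : Type} [Fintype R] [Fintype X] [Fintype A] [DecidableEq A] {n : ℕ}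

lemma pairPow_symEmbed_apply (N : MatC A →ₗ[ℂ] MatC B) (Z : MatC (Fin n → (R × X × Fin n) × A))
    (q p : (Fin n → R) × (Fin n → B)) (k : Equiv.Perm (Fin n) × (Fin n → X)) :
    pairPow (R × X × Fin n) N n Z (symEmbed q k) (symEmbed p k) =
      ∑ α : Fin n → A, ∑ α' : Fin n → A, Z (symEmbed (q.1, α) k) (symEmbed (p.1, α') k) *
        ∏ j, choiMat N (α j, q.2 j) (α' j, p.2 j) := by
  obtain ⟨σ, e⟩ := k
  -- substitute `a = α ∘ σ` and `a' = α' ∘ σ`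
  have hσ := (σ.symm.arrowCongr (Equiv.refl A)).sum_comp (M := ℂ)
  rw [pairPow_apply, ← hσ]
  refine Finset.sum_congr rfl fun α _ => ?_
  rw [← hσ]
  refine Finset.sum_congr rfl fun α' _ => ?_
  exact congrArg _ (Equiv.prod_comp σ fun j => choiMat N (α j, q.2 j) (α' j, p.2 j))

lemma sum_pairPow_symVec (N : MatC A →ₗ[ℂ] MatC B)
    (w : Matrix ((Fin n → R) × (Fin n → A)) (Fin n → X) ℂ) (q p : (Fin n → R) × (Fin n → B)) :
    ∑ k, pairPow (R × X × Fin n) N n (of fun f g => symVec w f * star (symVec w g))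
        (symEmbed q k) (symEmbed p k) =
      idTensor (Fin n → R) (powChan N n) (w * wᴴ) q p := by
  obtain ⟨r, b⟩ := q
  obtain ⟨r', b'⟩ := p
  have hpurif : ∀ σ α α', ∑ e, symVec w (symEmbed (r, α) (σ, e)) *
      star (symVec w (symEmbed (r', α') (σ, e))) =
        (n.factorial : ℂ)⁻¹ * (w * wᴴ) (r, α) (r', α') := by
    intro σ α α'
    simp only [symVec_symEmbed, mul_apply, conjTranspose_apply, Finset.mul_sum, star_mul',
      ← symCoeff_mul_star_symCoeff]
    exact Finset.sum_congr rfl fun e _ => by ring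
  calc _ = ∑ σ : Equiv.Perm (Fin n), ∑ α : Fin n → A, ∑ α' : Fin n → A,
          (∑ e, symVec w (symEmbed (r, α) (σ, e)) * star (symVec w (symEmbed (r', α') (σ, e)))) *
            ∏ j, choiMat N (α j, b j) (α' j, b' j) := by
        rw [Fintype.sum_prod_type]
        refine Finset.sum_congr rfl fun σ _ => ?_
        simp only [pairPow_symEmbed_apply, of_apply, Finset.sum_mul]
        rw [Finset.sum_comm]
        exact Finset.sum_congr rfl fun α _ => Finset.sum_comm
    _ = ∑ σ : Equiv.Perm (Fin n), (n.factorial : ℂ)⁻¹ *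
          idTensor (Fin n → R) (powChan N n) (w * wᴴ) (r, b) (r', b') := by
        simp only [hpurif, idTensor_powChan_apply, Finset.mul_sum, mul_assoc]
    _ = _ := by
        rw [Finset.sum_const, Finset.card_univ, Fintype.card_perm, Fintype.card_fin, nsmul_eq_mul,
          ← mul_assoc, mul_inv_cancel₀ (Nat.cast_ne_zero.2 n.factorial_ne_zero), one_mul]

end PartialTrace

theorem stmt4_general {A B : Type} [Fintype A] [Fintype B] [DecidableEq B]
    (N M : MatC A →ₗ[ℂ] MatC B) (hN : IsCPTP N)
    (ε : ℝ) (hε : ε ∈ Set.Ioo (0:ℝ) 1) (n : ℕ)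
    (R : Type) [Fintype R] [DecidableEq R]
    (ψ : MatC ((Fin n → R) × (Fin n → A))) (hψ : IsDensity ψ) :
    ∃ (R' : Type) (fR' : Fintype R') (dR' : DecidableEq R') (v : (Fin n → R' × A) → ℂ),
      letI := fR'; letI := dR';
      (∑ f, Complex.normSq (v f) = 1) ∧
      (∀ (π : Equiv.Perm (Fin n)) (f : Fin n → R' × A), v (f ∘ π) = v f) ∧
      DHe ε (idTensor (Fin n → R) (powChan N n) ψ) (idTensor (Fin n → R) (powChan M n) ψ) ≤
        DHe ε (pairPow R' N n (Matrix.of fun f g => v f * star (v g)))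
          (pairPow R' M n (Matrix.of fun f g => v f * star (v g))) := by
  obtain ⟨w, rfl⟩ := hψ.1.exists_eq_mul_conjTranspose
    (Equiv.arrowProdEquivProdArrow (Fin n) (fun _ => R) (fun _ => A))
  refine ⟨R × (R × A) × Fin n, inferInstance, inferInstance, symVec w, ?_, symVec_comp_perm w, ?_⟩
  · rw [sum_normSq_symVec, hψ.2, Complex.one_re]
  · refine DHe_le_DHe_of_betaSet_subset (betaSet_nonempty hε.1.le ?_ _)
      (betaSet_subset_of_partialTrace injective_uncurry_symEmbed (sum_pairPow_symVec N w)
        (sum_pairPow_symVec M w))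
    rw [trace_idTensor _ (trace_powChan N hN.2 n), hψ.2]

theorem stmt4 {A B : Type} [Fintype A] [DecidableEq A] [Fintype B] [DecidableEq B]
    (N M : MatC A →ₗ[ℂ] MatC B) (hN : IsCPTP N) (hM : IsCPTP M)
    (ε : ℝ) (hε : ε ∈ Set.Ioo (0:ℝ) 1) (n : ℕ) (hn : 1 ≤ n)
    (R : Type) [Fintype R] [DecidableEq R]
    (ψ : MatC ((Fin n → R) × (Fin n → A))) (hψ : IsDensity ψ) :
    ∃ (R' : Type) (fR' : Fintype R') (dR' : DecidableEq R') (v : (Fin n → R' × A) → ℂ),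
      letI := fR'; letI := dR';
      (∑ f, Complex.normSq (v f) = 1) ∧
      (∀ (π : Equiv.Perm (Fin n)) (f : Fin n → R' × A), v (f ∘ π) = v f) ∧
      DHe ε (idTensor (Fin n → R) (powChan N n) ψ) (idTensor (Fin n → R) (powChan M n) ψ) ≤
        DHe ε (pairPow R' N n (Matrix.of fun f g => v f * star (v g)))
          (pairPow R' M n (Matrix.of fun f g => v f * star (v g))) :=
  stmt4_general N M hN ε hε n R ψ hψ

end
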